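/- arXiv:math/0411600 — 7 statements merged into one kernel-verified Lean document; each statement's English description precedes it below -/
import Mathlib

section
/- For every integer t, setting a = -(4t-7)(t+2)(t²-6t+4), b = (5t-6)(5t²-10t-4), c = (3t²-4t+4)(t²-4t+6), x = 2(3t²-4t+4)(4t-7), y = (t²-6t+4)(5t²-10t-4), z = -(t+2)(5t-6)(t²-4t+6), one has x+y+z = 0, xy+yz+zx = -(a²+b²+c²), and xyz = 2abc; in particular x, y, z are the eigenvalues of the matrix M_{a,b,c}. -/
theorem stmt_1 (t : ℤ)
    (a : ℤ) (ha : a = -(4 * t - 7) * (t + 2) * (t ^ 2 - 6 * t + 4))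
    (b : ℤ) (hb : b = (5 * t - 6) * (5 * t ^ 2 - 10 * t - 4))
    (c : ℤ) (hc : c = (3 * t ^ 2 - 4 * t + 4) * (t ^ 2 - 4 * t + 6))
    (x : ℤ) (hx : x = 2 * (3 * t ^ 2 - 4 * t + 4) * (4 * t - 7))
    (y : ℤ) (hy : y = (t ^ 2 - 6 * t + 4) * (5 * t ^ 2 - 10 * t - 4))
    (z : ℤ) (hz : z = -(t + 2) * (5 * t - 6) * (t ^ 2 - 4 * t + 6)) :
    x + y + z = 0 ∧ x * y + y * z + z * x = -(a ^ 2 + b ^ 2 + c ^ 2) ∧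
      x * y * z = 2 * a * b * c := by
  subst ha hb hc hx hy hz; refine ⟨by ring, by ring, by ring⟩
end

section
/- For an integer t, with a, b, c defined by the parametrization a = -(4t-7)(t+2)(t²-6t+4), b = (5t-6)(5t²-10t-4), c = (3t²-4t+4)(t²-4t+6), the quantity q(a,b,c) = abc(a²-b²)(b²-c²)(c²-a²) vanishes if and only if t ∈ {-2,-1,0,1,2,4,10}. -/
/-!
Over `ℤ[t]` each of `a`, `b`, `c`, `a ± b`, `b ± c`, `c ± a` splits into linear factors and
quadratics with non-square discriminant, so `q(a, b, c)` is `-24` times the product of the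
`t - r`, `r ∈ {-2, -1, 0, 1, 2, 4, 10}`, times a polynomial with no integer root.
-/

def q {R : Type*} [CommRing R] (a b c : R) : R :=
  a * b * c * (a ^ 2 - b ^ 2) * (b ^ 2 - c ^ 2) * (c ^ 2 - a ^ 2)

theorem quadratic_ne_zero_of_not_isSquare_discrim {R : Type*} [CommRing R] {a b c : R}
    (h : ¬IsSquare (discrim a b c)) (x : R) : a * (x * x) + b * x + c ≠ 0 :=
  quadratic_ne_zero_of_discrim_ne_sq (fun s hs => h ⟨s, hs.trans (sq s)⟩) x

/- `a - b = -2 (2t² - 7t + 2)(t² + 4t - 8)`, `a + b = -4 (t + 1)(t - 1)(t - 2)(t - 10)`,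
`b - c = -t (t - 1)(t - 10)(3t - 8)`, `b + c = 3 (t + 1)(t - 2)(t² + 4t - 8)`,
`c - a = (t + 1)(t - 2)(t - 4)(7t - 4)`, `c + a = -(t - 1)(t - 10)(t² + 4t - 8)`. -/
theorem q_param_eq (t : ℤ) :
    q (-(4 * t - 7) * (t + 2) * (t ^ 2 - 6 * t + 4)) ((5 * t - 6) * (5 * t ^ 2 - 10 * t - 4))
        ((3 * t ^ 2 - 4 * t + 4) * (t ^ 2 - 4 * t + 6)) =
      -24 * (t * (t + 2) * (t - 4) * ((t + 1) * (t - 1) * (t - 2) * (t - 10)) ^ 3) *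
        ((4 * t - 7) * (5 * t - 6) * (3 * t - 8) * (7 * t - 4) *
          ((t ^ 2 - 6 * t + 4) * (5 * t ^ 2 - 10 * t - 4) * (3 * t ^ 2 - 4 * t + 4) *
            (t ^ 2 - 4 * t + 6) * (2 * t ^ 2 - 7 * t + 2) * (t ^ 2 + 4 * t - 8) ^ 3)) := by
  unfold q
  ring

theorem param_cofactor_ne_zero (t : ℤ) :
    (4 * t - 7) * (5 * t - 6) * (3 * t - 8) * (7 * t - 4) *
      ((t ^ 2 - 6 * t + 4) * (5 * t ^ 2 - 10 * t - 4) * (3 * t ^ 2 - 4 * t + 4) *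
        (t ^ 2 - 4 * t + 6) * (2 * t ^ 2 - 7 * t + 2) * (t ^ 2 + 4 * t - 8) ^ 3) ≠ 0 := by
  have quadratic {a b c p : ℤ} (hd : ¬IsSquare (discrim a b c))
      (hp : p = a * (t * t) + b * t + c) : p ≠ 0 :=
    hp ▸ quadratic_ne_zero_of_not_isSquare_discrim hd t
  have : 4 * t - 7 ≠ 0 := by omega
  have : 5 * t - 6 ≠ 0 := by omega
  have : 3 * t - 8 ≠ 0 := by omega
  have : 7 * t - 4 ≠ 0 := by omega
  have : t ^ 2 - 6 * t + 4 ≠ 0 :=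
    quadratic (a := 1) (b := -6) (c := 4) (by norm_num [discrim]) (by ring)
  have : 5 * t ^ 2 - 10 * t - 4 ≠ 0 :=
    quadratic (a := 5) (b := -10) (c := -4) (by norm_num [discrim]) (by ring)
  have : 3 * t ^ 2 - 4 * t + 4 ≠ 0 :=
    quadratic (a := 3) (b := -4) (c := 4) (by norm_num [discrim]) (by ring)
  have : t ^ 2 - 4 * t + 6 ≠ 0 :=
    quadratic (a := 1) (b := -4) (c := 6) (by norm_num [discrim]) (by ring)
  have : 2 * t ^ 2 - 7 * t + 2 ≠ 0 :=
    quadratic (a := 2) (b := -7) (c := 2) (by norm_num [discrim]) (by ring)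
  have : t ^ 2 + 4 * t - 8 ≠ 0 :=
    quadratic (a := 1) (b := 4) (c := -8) (by norm_num [discrim]) (by ring)
  positivity

theorem param_integer_factor_eq_zero_iff (t : ℤ) :
    t * (t + 2) * (t - 4) * ((t + 1) * (t - 1) * (t - 2) * (t - 10)) ^ 3 = 0 ↔
      t ∈ ({-2, -1, 0, 1, 2, 4, 10} : Set ℤ) := by
  simp only [mul_eq_zero, pow_eq_zero_iff, ne_eq, OfNat.ofNat_ne_zero, not_false_eq_true,
    Set.mem_insert_iff, Set.mem_singleton_iff]
  omega

theorem stmt_2 (t : ℤ)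
    (a : ℤ) (ha : a = -(4 * t - 7) * (t + 2) * (t ^ 2 - 6 * t + 4))
    (b : ℤ) (hb : b = (5 * t - 6) * (5 * t ^ 2 - 10 * t - 4))
    (c : ℤ) (hc : c = (3 * t ^ 2 - 4 * t + 4) * (t ^ 2 - 4 * t + 6)) :
    a * b * c * (a ^ 2 - b ^ 2) * (b ^ 2 - c ^ 2) * (c ^ 2 - a ^ 2) = 0 ↔
      t ∈ ({-2, -1, 0, 1, 2, 4, 10} : Set ℤ) := by
  subst ha hb hc
  change q _ _ _ = 0 ↔ _
  rw [q_param_eq, mul_eq_zero, or_iff_left (param_cofactor_ne_zero t), mul_eq_zero,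
    or_iff_right (by norm_num)]
  exact param_integer_factor_eq_zero_iff t
end

section
/- Let f : W → Z be a continuous map of topological spaces, F a sheaf of abelian groups on W, and t ≥ 0 an integer such that the higher direct images R^i f_* F vanish for i = 1, …, t. Then for all i = 0, 1, …, t there are isomorphisms H^i(W, F) ≅ H^i(Z, f_* F). -/
/-!
Let `I` be an injective resolution of `F`. As `f_*` is left exact and has an exact left
adjoint, `f_* I` is a complex of injectives with `f_* F = ker d⁰`, and its cohomology in degrees
`1, …, t` is `R^i f_* F = 0`. Such a complex computes the right derived functors of any left exact
functor in degrees `≤ t`: dimension shifting along `0 → A → J⁰ → ker d¹ → 0` reduces degree `n`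
for `A` to degree `n - 1` for `ker d¹`, resolved by the truncation of `J`. Applied to `Γ(Z, -)`,
this identifies `H^i(Z, f_* F)` with the cohomology of `Γ(Z, f_* I) = Γ(W, I)`, i.e. with
`H^i(W, F)`.
-/

open CategoryTheory CategoryTheory.Limits Opposite TopologicalSpace

universe u

/-- The global sections functor on sheaves of abelian groups on a topological space. -/
noncomputable def globalSections (X : TopCat.{u}) :
    Sheaf (Opens.grothendieckTopology X) AddCommGrpCat.{u} ⥤ AddCommGrpCat.{u} :=
  (sheafToPresheaf _ _) ⋙ (evaluation _ _).obj (op ⊤)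

/-- The pushforward functor `f_*` on sheaves of abelian groups, along a continuous map
`f : W → Z`. -/
noncomputable def pushforwardSheaf {W Z : TopCat.{u}} (f : W ⟶ Z) :
    Sheaf (Opens.grothendieckTopology W) AddCommGrpCat.{u} ⥤
      Sheaf (Opens.grothendieckTopology Z) AddCommGrpCat.{u} :=
  (Opens.map f).sheafPushforwardContinuous AddCommGrpCat.{u}
    (Opens.grothendieckTopology Z) (Opens.grothendieckTopology W)

instance (X : TopCat.{u}) : (globalSections X).Additive := ⟨rfl⟩

instance {W Z : TopCat.{u}} (f : W ⟶ Z) : (pushforwardSheaf f).Additive := ⟨rfl⟩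

variable {B : Type*} [Category* B] [Abelian B] {C : Type*} [Category* C] [Abelian C]
  {D : Type*} [Category* D] [Abelian D]

noncomputable def CategoryTheory.ShortComplex.homologyIsoCokernelOfIsKernel (S : ShortComplex C)
    {E : C} (q : S.X₁ ⟶ E) (k : E ⟶ S.X₂) (wk : k ≫ S.g = 0)
    (hk : IsLimit (KernelFork.ofι k wk)) (hf : q ≫ k = S.f) : S.homology ≅ cokernel q := by
  obtain rfl : hk.lift (KernelFork.ofι S.f S.zero) = q :=
    Fork.IsLimit.hom_ext hk ((Fork.IsLimit.lift_ι hk).trans hf.symm)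
  exact LeftHomologyData.homologyIso
    { K := E
      H := cokernel _
      i := k
      π := cokernel.π _
      wi := wk
      hi := hk
      wπ := cokernel.condition _
      hπ := cokernelIsCokernel _ }

namespace CochainComplex

lemma exactAt_augment_succ_succ_iff (K : CochainComplex C ℕ) {X : C} (f : X ⟶ K.X 0)
    (w : f ≫ K.d 0 1 = 0) (k : ℕ) :
    (K.augment f w).ExactAt (k + 2) ↔ K.ExactAt (k + 1) := by
  rw [(K.augment f w).exactAt_iff' (k + 1) (k + 2) (k + 3) (by simp) (by simp),
    K.exactAt_iff' k (k + 1) (k + 2) (by simp) (by simp)]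
  rfl

lemma exactAt_truncate_succ_iff (K : CochainComplex C ℕ) (k : ℕ) :
    (truncate.obj K).ExactAt (k + 1) ↔ K.ExactAt (k + 2) := by
  rw [(truncate.obj K).exactAt_iff' k (k + 1) (k + 2) (by simp) (by simp),
    K.exactAt_iff' (k + 1) (k + 2) (k + 3) (by simp) (by simp)]
  rfl

noncomputable abbrev syzygyShortComplex (J : CochainComplex C ℕ) {A : C} (ι : A ⟶ J.X 0)
    (w : ι ≫ J.d 0 1 = 0) : ShortComplex C :=
  ShortComplex.mk ι (kernel.lift (J.d 1 2) (J.d 0 1) (J.d_comp_d 0 1 2))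
    (by rw [← cancel_mono (kernel.ι _)]; simpa using w)

lemma shortExact_syzygyShortComplex (J : CochainComplex C ℕ) {A : C} (ι : A ⟶ J.X 0)
    (w : ι ≫ J.d 0 1 = 0) (hι : IsLimit (KernelFork.ofι ι w)) (hJ : J.ExactAt 1) :
    (J.syzygyShortComplex ι w).ShortExact where
  exact := ShortComplex.exact_of_f_is_kernel _
    (isKernelOfComp (kernel.ι _) _ hι _ (kernel.lift_ι _ _ _))
  mono_f := mono_of_isLimit_fork hι
  epi_g := (ShortComplex.exact_iff_epi_kernel_lift _).1
    ((J.exactAt_iff' 0 1 2 (by simp) (by simp)).1 hJ)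

end CochainComplex

namespace CategoryTheory.InjectiveResolution

noncomputable def ofIsLimitKernelFork {A : C} (M : CochainComplex C ℕ)
    (hM : ∀ n, Injective (M.X n)) (ι : A ⟶ M.X 0) (w : ι ≫ M.d 0 1 = 0)
    (hι : IsLimit (KernelFork.ofι ι w)) (hexact : ∀ n, M.ExactAt (n + 1)) :
    InjectiveResolution A where
  cocomplex := M
  injective := hM
  ι := (CochainComplex.fromSingle₀Equiv _ _).symm ⟨ι, w⟩
  quasiIso := ⟨fun n => by
    cases n with
    | zero =>
      have hmono : Mono ι := mono_of_isLimit_fork hι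
      have hexact₀ : (ShortComplex.mk ι (M.d 0 1) w).Exact :=
        ShortComplex.exact_of_f_is_kernel _ hι
      rw [CochainComplex.quasiIsoAt₀_iff, ShortComplex.quasiIso_iff_of_zeros _ rfl rfl
        (M.shape 0 0 (by simp))]
      refine (ShortComplex.exact_and_mono_f_iff_of_iso ?_).2 ⟨hexact₀, hmono⟩
      exact ShortComplex.isoMk (Iso.refl _) (Iso.refl _) (Iso.refl _)
        (by simp [CochainComplex.fromSingle₀Equiv_symm_apply_f_zero]; exact
          (Category.id_comp _).trans (Category.comp_id _).symm)
        ((Category.id_comp _).trans (Category.comp_id _).symm)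
    | succ n =>
      rw [quasiIsoAt_iff_exactAt _ _ (CochainComplex.exactAt_succ_single_obj _ _)]
      exact hexact n⟩

variable {S : ShortComplex C} (hS : S.ShortExact) [Injective S.X₂]
  (N : InjectiveResolution S.X₃)

noncomputable def ofShortExact : InjectiveResolution S.X₁ :=
  let ν : S.X₃ ⟶ N.cocomplex.X 0 := N.ι.f 0
  have : Mono ν := inferInstanceAs (Mono (N.ι.f 0))
  have hν : ν ≫ N.cocomplex.d 0 1 = 0 := N.ι_f_zero_comp_complex_d
  ofIsLimitKernelFork (N.cocomplex.augment (S.g ≫ ν) (by simp [hν]))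
    (fun | 0 => ‹_› | n + 1 => N.injective n) S.f ((S.zero_assoc ν).trans zero_comp)
    (isKernelCompMono hS.fIsKernel ν rfl) (fun
      | 0 => by
        rw [HomologicalComplex.exactAt_iff' _ 0 1 2 (by simp) (by simp)]
        let φ : ShortComplex.mk (S.g ≫ ν) (N.cocomplex.d 0 1) (by simp [hν]) ⟶
            ShortComplex.mk ν (N.cocomplex.d 0 1) hν :=
          { τ₁ := S.g, τ₂ := 𝟙 _, τ₃ := 𝟙 _ }
        have : Epi φ.τ₁ := hS.epi_g
        exact (ShortComplex.exact_iff_of_epi_of_isIso_of_mono φ).2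
          (ShortComplex.exact_of_f_is_kernel _ N.isLimitKernelFork)
      | n + 1 => (CochainComplex.exactAt_augment_succ_succ_iff _ _ _ n).2
          (N.cocomplex_exactAt_succ n))

end CategoryTheory.InjectiveResolution

namespace CategoryTheory.Functor

variable (T : C ⥤ D) [T.Additive]

noncomputable def mapHomologyOneIsoCokernel [PreservesFiniteLimits T] (K : CochainComplex C ℕ)
    {E : C} (q : K.X 0 ⟶ E) (k : E ⟶ K.X 1) (wk : k ≫ K.d 1 2 = 0)
    (hk : IsLimit (KernelFork.ofι k wk)) (hq : q ≫ k = K.d 0 1) :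
    ((T.mapHomologicalComplex (ComplexShape.up ℕ)).obj K).homology 1 ≅ cokernel (T.map q) :=
  let L := (T.mapHomologicalComplex (ComplexShape.up ℕ)).obj K
  have wTk : T.map k ≫ T.map (K.d 1 2) = 0 := by rw [← T.map_comp, wk, T.map_zero]
  L.homologyIsoSc' 0 1 2 (by simp) (by simp) ≪≫
    (L.sc' 0 1 2).homologyIsoCokernelOfIsKernel (T.map q) (T.map k) wTk
      (KernelFork.mapIsLimit _ hk T) ((T.map_comp q k).symm.trans (congrArg T.map hq))

variable [EnoughInjectives C]

noncomputable def rightDerivedZeroIsoHomologyZero [PreservesFiniteLimits T]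
    (J : CochainComplex C ℕ) {A : C} (ι : A ⟶ J.X 0) (w : ι ≫ J.d 0 1 = 0)
    (hι : IsLimit (KernelFork.ofι ι w)) :
    (T.rightDerived 0).obj A ≅
      ((T.mapHomologicalComplex (ComplexShape.up ℕ)).obj J).homology 0 :=
  T.rightDerivedZeroIsoSelf.app A ≪≫
    IsLimit.conePointUniqueUpToIso (KernelFork.mapIsLimit _ hι T)
      (((T.mapHomologicalComplex (ComplexShape.up ℕ)).obj J).cyclesIsKernel 0 1 (by simp)) ≪≫
    CochainComplex.isoHomologyπ₀ _

section ShortExact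

variable {S : ShortComplex C} (hS : S.ShortExact) [Injective S.X₂]

noncomputable def rightDerivedOneIsoCokernelOfShortExact [PreservesFiniteLimits T] :
    (T.rightDerived 1).obj S.X₁ ≅ cokernel (T.map S.g) :=
  let N := InjectiveResolution.of S.X₃
  (InjectiveResolution.ofShortExact hS N).isoRightDerivedObj T 1 ≪≫
    T.mapHomologyOneIsoCokernel (InjectiveResolution.ofShortExact hS N).cocomplex S.g
      (N.ι.f 0) N.ι_f_zero_comp_complex_d N.isLimitKernelFork rfl

noncomputable def rightDerivedSuccSuccIsoOfShortExact (k : ℕ) :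
    (T.rightDerived (k + 2)).obj S.X₁ ≅ (T.rightDerived (k + 1)).obj S.X₃ :=
  let N := InjectiveResolution.of S.X₃
  (InjectiveResolution.ofShortExact hS N).isoRightDerivedObj T (k + 2) ≪≫
    HomologicalComplex.homologyIsoSc' _ (k + 1) (k + 2) (k + 3) (by simp) (by simp) ≪≫
    (HomologicalComplex.homologyIsoSc' ((T.mapHomologicalComplex (ComplexShape.up ℕ)).obj
      N.cocomplex) k (k + 1) (k + 2) (by simp) (by simp)).symm ≪≫
    (N.isoRightDerivedObj T (k + 1)).symm

end ShortExact

noncomputable def rightDerivedObjIsoHomologyOfExactAt [PreservesFiniteLimits T] :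
    (n : ℕ) → (J : CochainComplex C ℕ) → (∀ i, Injective (J.X i)) → {A : C} →
    (ι : A ⟶ J.X 0) → (w : ι ≫ J.d 0 1 = 0) → IsLimit (KernelFork.ofι ι w) →
    (∀ i, 1 ≤ i → i ≤ n → J.ExactAt i) →
    ((T.rightDerived n).obj A ≅
      ((T.mapHomologicalComplex (ComplexShape.up ℕ)).obj J).homology n)
  | 0, J, _, _, ι, w, hι, _ => T.rightDerivedZeroIsoHomologyZero J ι w hι
  | 1, J, hJ, _, ι, w, hι, hexact =>
    have := hJ 0
    T.rightDerivedOneIsoCokernelOfShortExact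
        (J.shortExact_syzygyShortComplex ι w hι (hexact 1 le_rfl le_rfl)) ≪≫
      (T.mapHomologyOneIsoCokernel J _ (kernel.ι _) (kernel.condition _) (kernelIsKernel _)
        (kernel.lift_ι _ _ _)).symm
  | k + 2, J, hJ, _, ι, w, hι, hexact =>
    have := hJ 0
    T.rightDerivedSuccSuccIsoOfShortExact
        (J.shortExact_syzygyShortComplex ι w hι (hexact 1 le_rfl (by omega))) k ≪≫
      rightDerivedObjIsoHomologyOfExactAt (k + 1) (CochainComplex.truncate.obj J)
        (fun i => hJ (i + 1)) (kernel.ι (J.d 1 2)) (kernel.condition _) (kernelIsKernel _) (fun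
          | i + 1, _, hi => (CochainComplex.exactAt_truncate_succ_iff J i).2
              (hexact (i + 2) (by omega) (by omega))) ≪≫
      HomologicalComplex.homologyIsoSc' _ k (k + 1) (k + 2) (by simp) (by simp) ≪≫
      (HomologicalComplex.homologyIsoSc' ((T.mapHomologicalComplex (ComplexShape.up ℕ)).obj J)
        (k + 1) (k + 2) (k + 3) (by simp) (by simp)).symm

noncomputable def rightDerivedCompObjIso [EnoughInjectives B] (G : B ⥤ C) [G.Additive]
    [PreservesFiniteLimits G] [G.PreservesInjectiveObjects] [PreservesFiniteLimits T] (X : B)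
    (n : ℕ) (hX : ∀ i, 1 ≤ i → i ≤ n → IsZero ((G.rightDerived i).obj X)) :
    ((G ⋙ T).rightDerived n).obj X ≅ (T.rightDerived n).obj (G.obj X) :=
  let I := InjectiveResolution.of X
  have hGι : G.map (I.ι.f 0) ≫ G.map (I.cocomplex.d 0 1) = 0 := by
    rw [← G.map_comp, I.ι_f_zero_comp_complex_d, G.map_zero]
  I.isoRightDerivedObj (G ⋙ T) n ≪≫
    (T.rightDerivedObjIsoHomologyOfExactAt n ((G.mapHomologicalComplex _).obj I.cocomplex)
      (fun i => G.injective_obj_of_injective (I.injective i)) (G.map (I.ι.f 0)) hGι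
      (KernelFork.mapIsLimit _ I.isLimitKernelFork G) (fun i h₁ h₂ =>
        (HomologicalComplex.exactAt_iff_isZero_homology _ _).2
          ((hX i h₁ h₂).of_iso (I.isoRightDerivedObj G i).symm))).symm

end CategoryTheory.Functor

section Sheaves

variable {W Z : TopCat.{u}} (f : W ⟶ Z)

noncomputable def pushforwardSheafAdjunction :
    (Opens.map f).sheafPullback AddCommGrpCat.{u} (Opens.grothendieckTopology Z)
      (Opens.grothendieckTopology W) ⊣ pushforwardSheaf f :=
  (Opens.map f).sheafAdjunctionContinuous _ _ _

instance : PreservesFiniteLimits (pushforwardSheaf f) :=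
  have := (pushforwardSheafAdjunction f).rightAdjoint_preservesLimits
  inferInstance

instance : (pushforwardSheaf f).PreservesInjectiveObjects :=
  have : PreservesFiniteLimits ((Opens.map f).op.lan : (_ ⥤ _ ⥤ AddCommGrpCat.{u})) :=
    lan_preservesFiniteLimits_of_flat _ _
  have : PreservesFiniteLimits ((Opens.map f).sheafPullback AddCommGrpCat.{u}
      (Opens.grothendieckTopology Z) (Opens.grothendieckTopology W)) :=
    Functor.sheafPullbackConstruction.preservesFiniteLimits _ _ _ _
  Functor.preservesInjectiveObjects_of_adjunction_of_preservesMonomorphisms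
    (pushforwardSheafAdjunction f)

instance (X : TopCat.{u}) : PreservesFiniteLimits (globalSections X) := by
  unfold globalSections; infer_instance

end Sheaves

/-- if `f : W → Z` is continuous, `F` a sheaf of abelian groups on `W`, and
the higher direct images `R^i f_* F` vanish for `i = 1, …, t`, then
`H^i(W, F) ≅ H^i(Z, f_* F)` for `i = 0, 1, …, t`.  Here sheaf cohomology `H^i` is the
`i`-th right derived functor of the global sections functor, and `R^i f_*` is the `i`-th
right derived functor of the pushforward functor. -/
theorem stmt_10 (W Z : TopCat.{u}) (f : W ⟶ Z)
    (F : Sheaf (Opens.grothendieckTopology W) AddCommGrpCat.{u})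
    [EnoughInjectives (Sheaf (Opens.grothendieckTopology W) AddCommGrpCat.{u})]
    [EnoughInjectives (Sheaf (Opens.grothendieckTopology Z) AddCommGrpCat.{u})]
    (t : ℕ)
    (hvanish : ∀ i : ℕ, 1 ≤ i → i ≤ t →
      IsZero (((pushforwardSheaf f).rightDerived i).obj F)) :
    ∀ i : ℕ, i ≤ t →
      Nonempty ((((globalSections W).rightDerived i).obj F) ≅
        (((globalSections Z).rightDerived i).obj ((pushforwardSheaf f).obj F))) :=
  -- `globalSections W` is definitionally `pushforwardSheaf f ⋙ globalSections Z`.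
  fun i hi => ⟨(globalSections Z).rightDerivedCompObjIso (pushforwardSheaf f) F i
    fun k h₁ h₂ => hvanish k h₁ (h₂.trans hi)⟩
end

section
/- The point Q = (2t(t+1)(t+2), 2√3·t(t²-4)(t+1)²) lies on the elliptic curve E : v² = u(u - 8t(t²-1))(u - (t²-1)(t+2)²) over ℚ(√3)(t), and the Galois conjugate of Q under √3 ↦ -√3 equals -Q. -/
open RatFunc

/-- The elliptic curve `v² = u(u - 8t(t²-1))(u - (t²-1)(t+2)²)` over `F(t)`, in affine
Weierstrass form `v² = u³ - (α+β)u² + αβ·u` with `α = 8t(t²-1)`, `β = (t²-1)(t+2)²`. -/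
noncomputable def Ecurve (F : Type*) [Field F] : WeierstrassCurve.Affine (RatFunc F) :=
  { a₁ := 0
    a₂ := -(8 * X * (X ^ 2 - 1) + (X ^ 2 - 1) * (X + 2) ^ 2)
    a₃ := 0
    a₄ := 8 * X * (X ^ 2 - 1) * ((X ^ 2 - 1) * (X + 2) ^ 2)
    a₆ := 0 }

/-- over `ℚ(√3)(t)` (here `F = ℚ(√3)` with `s = √3`, and `τ` the
coefficientwise extension to `F(t)` of the Galois automorphism `σ : √3 ↦ -√3`), the
point `Q = (2t(t+1)(t+2), 2√3·t(t²-4)(t+1)²)` lies on `E`, and its Galois conjugate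
`(τ Qx, τ Qy)` equals `-Q = (Qx, -Qy)`. -/
theorem stmt_14 (F : Type*) [Field F] [CharZero F] (s : F) (hs : s ^ 2 = 3)
    (σ : F ≃+* F) (hσs : σ s = -s) (hσQ : ∀ q : ℚ, σ (q : F) = (q : F))
    (τ : RatFunc F ≃+* RatFunc F) (hτX : τ X = X)
    (hτC : ∀ a : F, τ (RatFunc.C a) = RatFunc.C (σ a)) :
    (Ecurve F).Equation (2 * X * (X + 1) * (X + 2))
        (RatFunc.C s * (2 * X * (X ^ 2 - 4) * (X + 1) ^ 2)) ∧
      τ (2 * X * (X + 1) * (X + 2)) = 2 * X * (X + 1) * (X + 2) ∧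
      τ (RatFunc.C s * (2 * X * (X ^ 2 - 4) * (X + 1) ^ 2)) =
        (Ecurve F).negY (2 * X * (X + 1) * (X + 2))
          (RatFunc.C s * (2 * X * (X ^ 2 - 4) * (X + 1) ^ 2)) := by
  have hCs : (RatFunc.C s : RatFunc F) ^ 2 = 3 := by
    rw [← map_pow, hs, map_ofNat]
  refine ⟨?_, ?_, ?_⟩
  · rw [WeierstrassCurve.Affine.equation_iff]
    simp only [Ecurve]
    linear_combination (2 * X * (X ^ 2 - 4) * (X + 1) ^ 2 : RatFunc F) ^ 2 * hCs
  · simp [map_mul, map_add, hτX, map_ofNat]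
  · simp only [WeierstrassCurve.Affine.negY, Ecurve, map_mul, map_add, map_sub, map_pow,
      map_ofNat, map_one, hτX, hτC, hσs, map_neg]
    ring
end

section
/- For every integer t, setting a = t(t⁶-8t⁴+20t²-12), b = -t(t⁶-4t⁴+4), c = (t²-2)(t⁶-6t⁴+8t²-4), there exist integers x, y, z (given by polynomials in t) with x+y+z = 0, xy+yz+zx = -(a²+b²+c²), and xyz = 2abc; i.e., M_{a,b,c} has integral eigenvalues. -/
theorem stmt_16 (t : ℤ)
    (a : ℤ) (ha : a = t * (t ^ 6 - 8 * t ^ 4 + 20 * t ^ 2 - 12))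
    (b : ℤ) (hb : b = -t * (t ^ 6 - 4 * t ^ 4 + 4))
    (c : ℤ) (hc : c = (t ^ 2 - 2) * (t ^ 6 - 6 * t ^ 4 + 8 * t ^ 2 - 4)) :
    ∃ x y z : ℤ, x + y + z = 0 ∧
      x * y + y * z + z * x = -(a ^ 2 + b ^ 2 + c ^ 2) ∧
      x * y * z = 2 * a * b * c := by
  subst ha hb hc
  exact ⟨-t ^ 8 + 6 * t ^ 6 - 8 * t ^ 4 - 4 * t ^ 2 + 8,
    2 * t ^ 6 - 12 * t ^ 4 + 16 * t ^ 2 - 8,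
    t ^ 8 - 8 * t ^ 6 + 20 * t ^ 4 - 12 * t ^ 2, by ring, by ring, by ring⟩
end

section
/- Up to the action of SL₂(ℤ), there are exactly four positive definite even integral binary quadratic forms of discriminant 48, represented by the Gram matrices [[2,0],[0,24]], [[4,0],[0,12]], [[8,4],[4,8]], and [[6,0],[0,8]]. -/
open Matrix

/-- A positive definite even integral binary quadratic form of discriminant 48,
identified with its Gram matrix. -/
def IsEvenPosDef48 (M : Matrix (Fin 2) (Fin 2) ℤ) : Prop :=
  M.IsSymm ∧ Even (M 0 0) ∧ Even (M 1 1) ∧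
    (∀ x : Fin 2 → ℤ, x ≠ 0 → 0 < x ⬝ᵥ M.mulVec x) ∧ M.det = 48

/-- The four representative Gram matrices. -/
def reps : Set (Matrix (Fin 2) (Fin 2) ℤ) :=
  {!![2, 0; 0, 24], !![4, 0; 0, 12], !![8, 4; 4, 8], !![6, 0; 0, 8]}

abbrev SL2 := Matrix.SpecialLinearGroup (Fin 2) ℤ

lemma qf (a b c : ℤ) (x : Fin 2 → ℤ) :
    x ⬝ᵥ (!![a,b;b,c]).mulVec x = a * (x 0) * (x 0) + 2*b*(x 0)*(x 1) + c * (x 1) * (x 1) := by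
  simp [Matrix.mulVec, dotProduct, Fin.sum_univ_two]
  ring

lemma tr2 (p q r s : ℤ) : (!![p,q;r,s] : Matrix (Fin 2) (Fin 2) ℤ)ᵀ = !![p,r;q,s] := by
  ext i j; fin_cases i <;> fin_cases j <;> rfl

def Tm (m : ℤ) : SL2 := ⟨!![1,m;0,1], by simp [Matrix.det_fin_two_of]⟩
def Sw : SL2 := ⟨!![0,1;-1,0], by simp [Matrix.det_fin_two_of]⟩

lemma conjT (a b c m : ℤ) :
    ((Tm m : SL2) : Matrix (Fin 2) (Fin 2) ℤ)ᵀ * !![a,b;b,c] * ((Tm m : SL2) : Matrix (Fin 2) (Fin 2) ℤ) =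
      !![a, b + m*a; b + m*a, c + 2*b*m + a*m*m] := by
  show !![1,m;0,1]ᵀ * !![a,b;b,c] * !![1,m;0,1] = _
  rw [tr2]
  ext i j
  fin_cases i <;> fin_cases j <;> simp [Matrix.mul_apply, Fin.sum_univ_two] <;> ring

lemma conjS (a b c : ℤ) :
    ((Sw : SL2) : Matrix (Fin 2) (Fin 2) ℤ)ᵀ * !![a,b;b,c] * ((Sw : SL2) : Matrix (Fin 2) (Fin 2) ℤ) =
      !![c, -b; -b, a] := by
  show !![0,1;-1,0]ᵀ * !![a,b;b,c] * !![0,1;-1,0] = _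
  rw [tr2]
  ext i j
  fin_cases i <;> fin_cases j <;> simp [Matrix.mul_apply, Fin.sum_univ_two]

lemma chain (M M' : Matrix (Fin 2) (Fin 2) ℤ) (A : SL2)
    (h : (A : Matrix (Fin 2) (Fin 2) ℤ)ᵀ * M * (A : Matrix (Fin 2) (Fin 2) ℤ) = M')
    (h2 : ∃ B : SL2, (B : Matrix (Fin 2) (Fin 2) ℤ)ᵀ * M' * (B : Matrix (Fin 2) (Fin 2) ℤ) ∈ reps) :
    ∃ C : SL2, (C : Matrix (Fin 2) (Fin 2) ℤ)ᵀ * M * (C : Matrix (Fin 2) (Fin 2) ℤ) ∈ reps := by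
  obtain ⟨B, hB⟩ := h2
  refine ⟨A * B, ?_⟩
  have e : ((A * B : SL2) : Matrix (Fin 2) (Fin 2) ℤ)ᵀ * M * ((A * B : SL2) : Matrix (Fin 2) (Fin 2) ℤ)
      = (B : Matrix (Fin 2) (Fin 2) ℤ)ᵀ * M' * (B : Matrix (Fin 2) (Fin 2) ℤ) := by
    rw [← h]
    simp [Matrix.transpose_mul, mul_assoc]
  rw [e]; exact hB

lemma self_mem (M : Matrix (Fin 2) (Fin 2) ℤ) (h : M ∈ reps) :
    ∃ B : SL2, (B : Matrix (Fin 2) (Fin 2) ℤ)ᵀ * M * (B : Matrix (Fin 2) (Fin 2) ℤ) ∈ reps := by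
  refine ⟨1, ?_⟩
  simpa using h

lemma reduce : ∀ n : ℕ, ∀ a b c : ℤ, a.toNat ≤ n → 0 < a → 0 < c →
    a * c - b * b = 48 → Even a → Even c →
    ∃ A : SL2, (A : Matrix (Fin 2) (Fin 2) ℤ)ᵀ * !![a,b;b,c] * (A : Matrix (Fin 2) (Fin 2) ℤ) ∈ reps := by
  intro n
  induction n with
  | zero => intro a b c hn ha; omega
  | succ n ih =>
    intro a b c hn ha hc hdet hea hec
    have hmod1 : 0 ≤ b % a := Int.emod_nonneg b (by omega)
    have hmod2 : b % a < a := Int.emod_lt_of_pos b ha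
    have hmod3 : b % a = b - a * (b / a) := Int.emod_def b a
    obtain ⟨m, b', hb'eq, hbl, hbu⟩ :
        ∃ m b' : ℤ, b' = b + m * a ∧ -a < 2 * b' ∧ 2 * b' ≤ a := by
      rcases le_or_gt (2 * (b % a)) a with h | h
      · exact ⟨-(b / a), b % a, by rw [hmod3]; ring, by omega, h⟩
      · exact ⟨-(b / a) - 1, b % a - a, by rw [hmod3]; ring, by omega, by omega⟩
    obtain ⟨c', hc'def⟩ : ∃ c' : ℤ, c' = c + 2 * b * m + a * m * m := ⟨_, rfl⟩
    have hdet' : a * c' - b' * b' = 48 := by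
      rw [hc'def, hb'eq]; linear_combination hdet
    have hc' : 0 < c' := by
      by_contra hcon
      push_neg at hcon
      nlinarith [mul_self_nonneg b']
    obtain ⟨k, hk⟩ := hea
    obtain ⟨l, hl⟩ := hec
    have hec' : Even c' := ⟨l + b * m + k * m * m, by rw [hc'def, hl, hk]; ring⟩
    have step1 := conjT a b c m
    rw [← hb'eq, ← hc'def] at step1
    have step1' : ((Tm m : SL2) : Matrix (Fin 2) (Fin 2) ℤ)ᵀ * !![a,b;b,c] * ((Tm m : SL2) : Matrix (Fin 2) (Fin 2) ℤ) = !![a, b'; b', c'] := step1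
    rcases lt_or_ge c' a with hca | hca
    · -- swap and recurse
      have ih' := ih c' (-b') a (by omega) hc' ha
        (by linear_combination hdet') hec' ⟨k, hk⟩
      exact chain _ _ (Tm m) step1' (chain _ _ Sw (conjS a b' c') ih')
    · -- reduced: enumerate
      apply chain _ _ (Tm m) step1'
      have hb2 : 4 * (b' * b') ≤ a * a := by nlinarith
      have ha8 : a ≤ 8 := by nlinarith
      obtain ⟨j, hj⟩ := hec'
      clear step1 step1' hdet hc'def ih hn hmod1 hmod2 hmod3 hb'eq hc hl
      have hbb1 : -4 ≤ b' := by omega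
      have hbb2 : b' ≤ 4 := by omega
      interval_cases a
      · omega
      · interval_cases b' <;> first | omega |
          (have : c' = 24 := (by omega); subst this; exact self_mem _ (by left; rfl))
      · omega
      · interval_cases b' <;> first | omega |
          (have : c' = 12 := (by omega); subst this; exact self_mem _ (by right; left; rfl))
      · omega
      · interval_cases b' <;> first | omega |
          (have : c' = 8 := (by omega); subst this; exact self_mem _ (by right; right; right; rfl))
      · omega
      · interval_cases b' <;> first | omega |
          (have : c' = 8 := (by omega); subst this;
           exact self_mem _ (by right; right; left; rfl))

lemma coord (x : Fin 2 → ℤ) (hx : x ≠ 0) : x 0 ≠ 0 ∨ x 1 ≠ 0 := by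
  by_contra h
  push_neg at h
  exact hx (funext fun i => by fin_cases i <;> simp [h.1, h.2])

lemma one_le_sq (t : ℤ) (h : t ≠ 0) : 1 ≤ t * t := by
  rcases h.lt_or_gt with h | h <;> nlinarith

lemma coe_inv_mul (A : SL2) : ((A : Matrix (Fin 2) (Fin 2) ℤ)) * ((A⁻¹ : SL2) : Matrix (Fin 2) (Fin 2) ℤ) = 1 := by
  rw [← Matrix.SpecialLinearGroup.coe_mul, mul_inv_cancel]
  rfl

lemma conj_symm (A : SL2) (M N : Matrix (Fin 2) (Fin 2) ℤ)
    (h : (A : Matrix (Fin 2) (Fin 2) ℤ)ᵀ * M * (A : Matrix (Fin 2) (Fin 2) ℤ) = N) :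
    ((A⁻¹ : SL2) : Matrix (Fin 2) (Fin 2) ℤ)ᵀ * N * ((A⁻¹ : SL2) : Matrix (Fin 2) (Fin 2) ℤ) = M := by
  rw [← h]
  calc ((A⁻¹ : SL2) : Matrix (Fin 2) (Fin 2) ℤ)ᵀ * ((A : Matrix (Fin 2) (Fin 2) ℤ)ᵀ * M * A) * ((A⁻¹ : SL2) : Matrix (Fin 2) (Fin 2) ℤ)
      = (((A:Matrix (Fin 2) (Fin 2) ℤ) * ((A⁻¹ : SL2) : Matrix (Fin 2) (Fin 2) ℤ))ᵀ) * M * ((A:Matrix (Fin 2) (Fin 2) ℤ) * ((A⁻¹ : SL2) : Matrix (Fin 2) (Fin 2) ℤ)) := by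
        rw [Matrix.transpose_mul]; noncomm_ring
    _ = M := by rw [coe_inv_mul]; simp

lemma transfer (M N : Matrix (Fin 2) (Fin 2) ℤ) (A : SL2)
    (h : (A : Matrix (Fin 2) (Fin 2) ℤ)ᵀ * M * (A : Matrix (Fin 2) (Fin 2) ℤ) = N)
    (v : ℤ) (x : Fin 2 → ℤ) (hx : x ≠ 0) (hv : x ⬝ᵥ N.mulVec x = v) :
    ∃ y : Fin 2 → ℤ, y ≠ 0 ∧ y ⬝ᵥ M.mulVec y = v := by
  refine ⟨(A : Matrix (Fin 2) (Fin 2) ℤ).mulVec x, ?_, ?_⟩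
  · intro h0
    apply hx
    have := congrArg (((A⁻¹ : SL2) : Matrix (Fin 2) (Fin 2) ℤ).mulVec) h0
    rwa [Matrix.mulVec_mulVec, ← Matrix.SpecialLinearGroup.coe_mul, inv_mul_cancel,
      Matrix.SpecialLinearGroup.coe_one, Matrix.one_mulVec, Matrix.mulVec_zero] at this
  · rw [← hv, ← h]
    simp only [← Matrix.mulVec_mulVec, Matrix.dotProduct_mulVec, Matrix.vecMul_transpose]

lemma norep (a b c v : ℤ)
    (h8 : ∀ u w : ZMod 8, (a : ZMod 8) * u * u + 2 * (b : ZMod 8) * u * w + (c : ZMod 8) * w * w ≠ (v : ZMod 8)) :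
    ∀ x : Fin 2 → ℤ, x ⬝ᵥ (!![a,b;b,c]).mulVec x ≠ v := by
  intro x h
  rw [qf] at h
  have h2 := congrArg (fun t : ℤ => (t : ZMod 8)) h
  push_cast at h2
  exact h8 (x 0) (x 1) h2

lemma e10 : (![1,0] : Fin 2 → ℤ) ≠ 0 := by
  intro h
  simpa using congrFun h 0

lemma repa (a b c : ℤ) : (![1,0] : Fin 2 → ℤ) ⬝ᵥ (!![a,b;b,c]).mulVec ![1,0] = a := by
  rw [qf]; norm_num

lemma distinguish (a b c a' b' c' : ℤ)
    (hn : ∀ y : Fin 2 → ℤ, y ⬝ᵥ (!![a',b';b',c']).mulVec y ≠ a)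
    (A : SL2) :
    (A : Matrix (Fin 2) (Fin 2) ℤ)ᵀ * !![a,b;b,c] * (A : Matrix (Fin 2) (Fin 2) ℤ) ≠ !![a',b';b',c'] := by
  intro h
  have h2 := conj_symm A _ _ h
  obtain ⟨y, hy0, hyv⟩ := transfer _ _ (A⁻¹) h2 a ![1,0] e10 (repa a b c)
  exact hn y hyv

lemma distinguish' (a b c a' b' c' : ℤ)
    (hn : ∀ y : Fin 2 → ℤ, y ⬝ᵥ (!![a,b;b,c]).mulVec y ≠ a')
    (A : SL2) :
    (A : Matrix (Fin 2) (Fin 2) ℤ)ᵀ * !![a,b;b,c] * (A : Matrix (Fin 2) (Fin 2) ℤ) ≠ !![a',b';b',c'] := by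
  intro h
  obtain ⟨y, hy0, hyv⟩ := transfer _ _ A h a' ![1,0] e10 (repa a' b' c')
  exact hn y hyv

lemma posdef_form (a b c : ℤ) (ha : 0 < a) (hd : 0 < a * c - b * b) :
    ∀ x : Fin 2 → ℤ, x ≠ 0 → 0 < x ⬝ᵥ (!![a,b;b,c]).mulVec x := by
  intro x hx
  rw [qf]
  rcases eq_or_ne (x 1) 0 with h1 | h1
  · rcases coord x hx with h | h
    · have h0 := one_le_sq (x 0) h
      rw [h1]
      nlinarith
    · exact absurd h1 h
  · have h2 : 1 ≤ x 1 * x 1 := one_le_sq _ h1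
    by_contra hcon
    push_neg at hcon
    nlinarith [mul_self_nonneg (a * x 0 + b * x 1), mul_pos ha ha]

/-- up to the action of `SL₂(ℤ)` (`M ↦ AᵀMA`), there are exactly four
positive definite even integral binary quadratic forms of discriminant 48, represented
by `[[2,0],[0,24]]`, `[[4,0],[0,12]]`, `[[8,4],[4,8]]` and `[[6,0],[0,8]]`. -/
theorem stmt_17 :
    (∀ N ∈ reps, IsEvenPosDef48 N) ∧
    (∀ M : Matrix (Fin 2) (Fin 2) ℤ, IsEvenPosDef48 M →
      ∃ A : Matrix.SpecialLinearGroup (Fin 2) ℤ,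
        (A : Matrix (Fin 2) (Fin 2) ℤ)ᵀ * M * (A : Matrix (Fin 2) (Fin 2) ℤ) ∈ reps) ∧
    (∀ N ∈ reps, ∀ N' ∈ reps, N ≠ N' →
      ∀ A : Matrix.SpecialLinearGroup (Fin 2) ℤ,
        (A : Matrix (Fin 2) (Fin 2) ℤ)ᵀ * N * (A : Matrix (Fin 2) (Fin 2) ℤ) ≠ N') := by
  refine ⟨?_, ?_, ?_⟩
  · -- each rep is a valid form
    intro N hN
    simp only [reps, Set.mem_insert_iff, Set.mem_singleton_iff] at hN
    rcases hN with rfl | rfl | rfl | rfl <;>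
      exact ⟨tr2 _ _ _ _, by decide, by decide,
        posdef_form _ _ _ (by norm_num) (by norm_num), by norm_num [Matrix.det_fin_two_of]⟩
  · -- every form is equivalent to a rep
    rintro M ⟨hsym, he0, he1, hpos, hdet⟩
    have hsym' : M 1 0 = M 0 1 := hsym.apply 0 1
    have hM : M = !![M 0 0, M 0 1; M 0 1, M 1 1] := by
      ext i j
      fin_cases i <;> fin_cases j <;> simp [hsym']
    have ha : 0 < M 0 0 := by
      have := hpos ![1,0] e10
      rwa [hM, repa] at this
    have hc : 0 < M 1 1 := by
      have h01 : (![0,1] : Fin 2 → ℤ) ≠ 0 := by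
        intro h; simpa using congrFun h 1
      have := hpos ![0,1] h01
      rw [hM, qf] at this
      simpa using this
    have hdet' : M 0 0 * M 1 1 - M 0 1 * M 0 1 = 48 := by
      rw [Matrix.det_fin_two, hsym'] at hdet
      linarith
    rw [hM]
    exact reduce (M 0 0).toNat _ _ _ le_rfl ha hc hdet' he0 he1
  · -- no two distinct reps are equivalent
    intro N hN N' hN' hne A
    simp only [reps, Set.mem_insert_iff, Set.mem_singleton_iff] at hN hN'
    rcases hN with rfl | rfl | rfl | rfl <;> rcases hN' with rfl | rfl | rfl | rfl <;>
      first
      | exact absurd rfl hne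
      | exact distinguish _ _ _ _ _ _ (norep _ _ _ _ (by decide)) A
      | exact distinguish' _ _ _ _ _ _ (norep _ _ _ _ (by decide)) A
end

section
/- Among the four even positive definite binary lattices with Gram matrices [[2,0],[0,24]], [[4,0],[0,12]], [[8,4],[4,8]], [[6,0],[0,8]], only ℤ(2) ⊕ ℤ(24) (the first one) has a discriminant-quadratic form taking the value 1/24 + 2ℤ in ℚ/2ℤ. -/
open Matrix

/-- The `ℚ`-bilinear extension of the integral pairing with Gram matrix `M`. -/
noncomputable def pairQ (M : Matrix (Fin 2) (Fin 2) ℤ) (x y : Fin 2 → ℚ) : ℚ :=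
  x ⬝ᵥ (M.map ((↑) : ℤ → ℚ)).mulVec y

/-- Membership in the dual lattice `L*` of the lattice `L = ℤ²` with Gram matrix `M`. -/
def InDual (M : Matrix (Fin 2) (Fin 2) ℤ) (x : Fin 2 → ℚ) : Prop :=
  ∀ y : Fin 2 → ℤ, ∃ m : ℤ, pairQ M x (fun i => (y i : ℚ)) = m

/-- "The discriminant-quadratic form `q_L : L*/L → ℚ/2ℤ` of the lattice with Gram matrix
`M` takes the value `1/24 + 2ℤ`": there is a dual vector `x` with `⟨x,x⟩ ≡ 1/24 mod 2ℤ`. -/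
def TakesValue124 (M : Matrix (Fin 2) (Fin 2) ℤ) : Prop :=
  ∃ x : Fin 2 → ℚ, InDual M x ∧ ∃ k : ℤ, pairQ M x x - 1 / 24 = 2 * k

lemma pairQ_eq (M : Matrix (Fin 2) (Fin 2) ℤ) (x y : Fin 2 → ℚ) :
    pairQ M x y = x 0 * (M 0 0 * y 0 + M 0 1 * y 1) + x 1 * (M 1 0 * y 0 + M 1 1 * y 1) := by
  simp [pairQ, Matrix.mulVec, dotProduct, Fin.sum_univ_two]

lemma sq_mod4 (m : ℤ) : ∃ c : ℤ, m * m = 4 * c ∨ m * m = 4 * c + 1 := by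
  rcases Int.even_or_odd m with ⟨c, hc⟩ | ⟨c, hc⟩
  · exact ⟨c * c, Or.inl (by subst hc; ring)⟩
  · exact ⟨c * c + c, Or.inr (by subst hc; ring)⟩

/-- among the four even positive definite binary lattices with Gram matrices
`[[2,0],[0,24]]`, `[[4,0],[0,12]]`, `[[8,4],[4,8]]`, `[[6,0],[0,8]]`, only the first one,
`ℤ(2) ⊕ ℤ(24)`, has a discriminant-quadratic form taking the value `1/24 + 2ℤ` in `ℚ/2ℤ`. -/
theorem stmt_18 :
    TakesValue124 !![2, 0; 0, 24] ∧
      ¬TakesValue124 !![4, 0; 0, 12] ∧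
      ¬TakesValue124 !![8, 4; 4, 8] ∧
      ¬TakesValue124 !![6, 0; 0, 8] := by
  refine ⟨⟨![0, 1/24], fun y => ⟨y 1, ?_⟩, 0, ?_⟩, ?_, ?_, ?_⟩
  · rw [pairQ_eq]; norm_num; ring
  · rw [pairQ_eq]; norm_num
  · rintro ⟨x, hd, k, hk⟩
    obtain ⟨m0, h0⟩ := hd ![1, 0]
    obtain ⟨m1, h1⟩ := hd ![0, 1]
    rw [pairQ_eq] at h0 h1 hk
    norm_num at h0 h1 hk
    have hx0 : x 0 = m0 / 4 := by linarith
    have hx1 : x 1 = m1 / 12 := by linarith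
    rw [hx0, hx1] at hk
    have he : (6 * (m0 * m0) + 2 * (m1 * m1) - 1 : ℚ) = 48 * k := by
      field_simp at hk; linarith
    have hz : 6 * (m0 * m0) + 2 * (m1 * m1) - 1 = 48 * k := by exact_mod_cast he
    omega
  · rintro ⟨x, hd, k, hk⟩
    obtain ⟨m0, h0⟩ := hd ![1, 0]
    obtain ⟨m1, h1⟩ := hd ![0, 1]
    rw [pairQ_eq] at h0 h1 hk
    norm_num at h0 h1 hk
    -- 8 x0 + 4 x1 = m0, 4 x0 + 8 x1 = m1
    have hx0 : x 0 = (2 * m0 - m1) / 12 := by linarith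
    have hx1 : x 1 = (2 * m1 - m0) / 12 := by linarith
    rw [hx0, hx1] at hk
    have he : (4 * (m0 * m0) - 4 * (m0 * m1) + 4 * (m1 * m1) - 1 : ℚ) = 48 * k := by
      field_simp at hk; linarith
    have hz : 4 * (m0 * m0) - 4 * (m0 * m1) + 4 * (m1 * m1) - 1 = 48 * k := by exact_mod_cast he
    omega
  · rintro ⟨x, hd, k, hk⟩
    obtain ⟨m0, h0⟩ := hd ![1, 0]
    obtain ⟨m1, h1⟩ := hd ![0, 1]
    rw [pairQ_eq] at h0 h1 hk
    norm_num at h0 h1 hk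
    have hx0 : x 0 = m0 / 6 := by linarith
    have hx1 : x 1 = m1 / 8 := by linarith
    rw [hx0, hx1] at hk
    have he : (8 * (m0 * m0) + 6 * (m1 * m1) - 2 : ℚ) = 96 * k := by
      field_simp at hk; linarith
    have hz : 8 * (m0 * m0) + 6 * (m1 * m1) - 2 = 96 * k := by exact_mod_cast he
    obtain ⟨c, hc⟩ := sq_mod4 m1
    rcases hc with hc | hc <;> omega
end
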